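/- arXiv:2504.02350 — 2 statements merged into one kernel-verified Lean document; each statement's English description precedes it below -/
import Mathlib

section
/- Seidel's contraction theorem: Let [β_0/α_0; α_1/β_1, α_2/β_2, …] be a contractable generalized continued fraction with convergents P_k/Q_k, and let (n_k)_{k≥0} be a strictly increasing sequence of non-negative integers. Then the convergent numerators P_k' and denominators Q_k' of the contracted continued fraction with respect to (n_k) satisfy (P_k', Q_k') = c_k (P_{n_k}, Q_{n_k}) for all k ≥ -2, where c_k = ∏_{j=0}^{k-1} Q_{[n_{j-1}+2, n_j]} (with n_j := j for j < 0 and empty product equal to 1). In particular, the contracted continued fraction has convergents P_{n_k}/Q_{n_k}. -/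
/-!
Let `(P_{[m,n]}, Q_{[m,n]})` be the last column of `B_{[m,n]}` and let `x_n` be one of its
entries for `m = -1`, i.e. `x_n = P_n` or `x_n = Q_n`. Splitting `B_{[-1,n]}` after the index
`m + 1`, and using that the first column of `B_{[a,b]}` is the last column of `B_{[a,b-1]}`,
gives `x_n = P_{[m+2,n]} x_m + Q_{[m+2,n]} x_{m+1}`. Expanding `x_q`, `x_{q+1}` and `x_r` in
terms of `x_p, x_{p+1}` for `p < q < r` yields the contraction identity
`Q_{[p+2,q]} x_r = Q_{[p+2,r]} x_q - det B_{[p+2,q+1]} Q_{[q+2,r]} x_p`.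
For `p, q, r = n_{k-1}, n_k, n_{k+1}`, multiplied by `c_k = c_{k-1} Q_{[n_{k-2}+2, n_{k-1}]}`,
this is the three-term recurrence of the contracted fraction, so a two-step induction from
`k = -2, -1` proves the claim. Contractability makes every `c_k` nonzero.
-/

open Finset

noncomputable section

/-- The matrix `B_n = [[0, α_n],[1, β_n]]`. -/
def Bmat (α β : ℤ → ℂ) (n : ℤ) : Matrix (Fin 2) (Fin 2) ℂ := !![0, α n; 1, β n]

/-- `Bprod α β m k = B_m B_{m+1} ⋯ B_{m+k}`. -/
def Bprod (α β : ℤ → ℂ) (m : ℤ) : ℕ → Matrix (Fin 2) (Fin 2) ℂ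
  | 0 => Bmat α β m
  | k + 1 => Bprod α β m k * Bmat α β (m + k + 1)

/-- `Bseg α β m n = B_{[m,n]} = B_m B_{m+1} ⋯ B_n`, the identity if `n < m`. -/
def Bseg (α β : ℤ → ℂ) (m n : ℤ) : Matrix (Fin 2) (Fin 2) ℂ :=
  if n < m then 1 else Bprod α β m (n - m).toNat

section Bseg

variable (α β : ℤ → ℂ)

lemma Bseg_of_lt {m n : ℤ} (h : n < m) : Bseg α β m n = 1 := if_pos h

lemma Bseg_self (m : ℤ) : Bseg α β m m = Bmat α β m := by
  simp [Bseg, Bprod]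

lemma Bseg_eq_Bseg_mul_Bmat {m n : ℤ} (h : m ≤ n) :
    Bseg α β m n = Bseg α β m (n - 1) * Bmat α β n := by
  rcases h.eq_or_lt with rfl | h
  · rw [Bseg_self, Bseg_of_lt α β (by omega), one_mul]
  · have hk : (n - m).toNat = (n - 1 - m).toNat + 1 := by omega
    have hn : m + ((n - 1 - m).toNat : ℤ) + 1 = n := by omega
    rw [Bseg, Bseg, if_neg (by omega), if_neg (by omega), hk, Bprod, hn]

lemma Bseg_eq_mul {m t n : ℤ} (h₁ : m - 1 ≤ t) (h₂ : t ≤ n) :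
    Bseg α β m n = Bseg α β m t * Bseg α β (t + 1) n := by
  induction n, h₂ using Int.leInduction with
  | base => rw [Bseg_of_lt α β (lt_add_one t), mul_one]
  | succ n htn ih =>
    rw [Bseg_eq_Bseg_mul_Bmat α β (m := m) (n := n + 1) (by omega),
      Bseg_eq_Bseg_mul_Bmat α β (m := t + 1) (n := n + 1) (by omega), add_sub_cancel_right, ih,
      mul_assoc]

lemma Bseg_apply_zero {m n : ℤ} (h : m ≤ n) (i : Fin 2) :
    Bseg α β m n i 0 = Bseg α β m (n - 1) i 1 := by
  simp [Bseg_eq_Bseg_mul_Bmat α β h, Matrix.mul_apply, Bmat]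

lemma Bseg_apply_one_eq_add {a m n : ℤ} (h₁ : a ≤ m + 1) (h₂ : m < n) (i : Fin 2) :
    Bseg α β a n i 1 =
      Bseg α β (m + 2) n 0 1 * Bseg α β a m i 1 +
        Bseg α β (m + 2) n 1 1 * Bseg α β a (m + 1) i 1 := by
  rw [Bseg_eq_mul α β (show a - 1 ≤ m + 1 by omega) h₂, Matrix.mul_apply, Fin.sum_univ_two,
    Bseg_apply_zero α β h₁, add_sub_cancel_right, add_assoc, one_add_one_eq_two]
  ring

lemma Bseg_apply_one_add_one {a n : ℤ} (h : a ≤ n) (i : Fin 2) :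
    Bseg α β a (n + 1) i 1 =
      Bseg α β a (n - 1) i 1 * α (n + 1) + Bseg α β a n i 1 * β (n + 1) := by
  have h₂ : n - 1 + 2 = n + 1 := by ring
  rw [Bseg_apply_one_eq_add α β (m := n - 1) (by omega) (by omega), h₂, sub_add_cancel,
    Bseg_self]
  simp [Bmat, mul_comm]

lemma det_Bseg {m n : ℤ} (h : m ≤ n + 1) :
    (Bseg α β m (n + 1)).det =
      Bseg α β m n 0 1 * Bseg α β m (n + 1) 1 1 - Bseg α β m (n + 1) 0 1 * Bseg α β m n 1 1 := by
  rw [Matrix.det_fin_two, Bseg_apply_zero α β h, Bseg_apply_zero α β h, add_sub_cancel_right]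

lemma contraction_identity {a p q r : ℤ} (ha : a ≤ p + 1) (hpq : p < q) (hqr : q < r)
    (i : Fin 2) :
    Bseg α β (p + 2) q 1 1 * Bseg α β a r i 1 =
      Bseg α β (p + 2) r 1 1 * Bseg α β a q i 1 -
        (Bseg α β (p + 2) (q + 1)).det * Bseg α β (q + 2) r 1 1 * Bseg α β a p i 1 := by
  rw [Bseg_apply_one_eq_add α β (m := q) (by omega) hqr,
    Bseg_apply_one_eq_add α β (a := p + 2) (m := q) (by omega) hqr,
    Bseg_apply_one_eq_add α β (n := q) ha hpq,
    Bseg_apply_one_eq_add α β (n := q + 1) ha (by omega),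
    det_Bseg α β (by omega)]
  ring

end Bseg

lemma prod_Icc_zero_eq_prod_mul {M : Type*} [CommMonoid M] {f : ℤ → M}
    (hf : ∀ j < 0, f j = 1) (k : ℤ) :
    ∏ j ∈ Icc 0 k, f j = (∏ j ∈ Icc 0 (k - 1), f j) * f k := by
  rcases le_or_gt 0 k with hk | hk
  · rw [← insert_Icc_sub_one_right_eq_Icc hk, prod_insert (by simp), mul_comm]
  · rw [Icc_eq_empty_of_lt hk, Icc_eq_empty_of_lt (by omega), hf k hk, mul_one]

lemma self_le_apply_of_extend {nk : ℤ → ℤ} (hneg : ∀ k : ℤ, k < 0 → nk k = k)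
    (hpos : ∀ k : ℤ, 0 ≤ k → 0 ≤ nk k) (hmono : ∀ k : ℤ, 0 ≤ k → nk k < nk (k + 1)) (k : ℤ) :
    k ≤ nk k := by
  rcases lt_or_ge k 0 with hk | hk
  · exact (hneg k hk).ge
  induction k, hk using Int.leInduction with
  | base => exact hpos 0 le_rfl
  | succ k hk ih => linarith [hmono k hk]

lemma strictMono_of_extend {nk : ℤ → ℤ} (hneg : ∀ k : ℤ, k < 0 → nk k = k)
    (hpos : ∀ k : ℤ, 0 ≤ k → 0 ≤ nk k) (hmono : ∀ k : ℤ, 0 ≤ k → nk k < nk (k + 1)) :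
    StrictMono nk := by
  refine strictMono_int_of_lt_succ fun k => ?_
  rcases le_or_gt 0 k with hk | hk
  · exact hmono k hk
  rcases (show k = -1 ∨ k + 1 < 0 by omega) with rfl | hk'
  · rw [hneg (-1) hk]
    exact (hpos 0 le_rfl).trans_lt' (by norm_num)
  · rw [hneg k hk, hneg (k + 1) hk']
    exact lt_add_one k

section Contraction

variable (α β : ℤ → ℂ) {nk : ℤ → ℤ}

lemma prod_Icc_Bseg_eq_prod_mul (hneg : ∀ k : ℤ, k < 0 → nk k = k) (k : ℤ) :
    ∏ j ∈ Icc 0 k, Bseg α β (nk (j - 1) + 2) (nk j) 1 1 =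
      (∏ j ∈ Icc 0 (k - 1), Bseg α β (nk (j - 1) + 2) (nk j) 1 1) *
        Bseg α β (nk (k - 1) + 2) (nk k) 1 1 := by
  refine prod_Icc_zero_eq_prod_mul (fun j hj => ?_) k
  rw [hneg j hj, hneg (j - 1) (by omega), Bseg_of_lt α β (by omega), Matrix.one_apply_eq]

lemma prod_Icc_Bseg_ne_zero (hcontr : ∀ m n : ℤ, 0 ≤ m → m ≤ n → Bseg α β (m + 1) n 1 1 ≠ 0)
    (hle : ∀ k, k ≤ nk k) (hmono : StrictMono nk) (k : ℤ) :
    ∏ j ∈ Icc 0 k, Bseg α β (nk (j - 1) + 2) (nk j) 1 1 ≠ 0 := by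
  refine prod_ne_zero_iff.mpr fun j hj => ?_
  have := hcontr (nk (j - 1) + 1) (nk j) (by linarith [hle (j - 1), (mem_Icc.mp hj).1])
    (hmono (sub_one_lt j))
  rwa [add_assoc, one_add_one_eq_two] at this

end Contraction

/-- Seidel's contraction theorem.  Here `Bseg α β (-1) n 0 1 = P_n` and
`Bseg α β (-1) n 1 1 = Q_n` are the convergent numerators/denominators of the original gcf
(the digits `α_n, β_n` for `n ≥ 0`, with `α_{-1} = 1, β_{-1} = 0`), and similarly for the
contracted continued fraction with digits `α', β'`.  The sequence `nk` extends the strictly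
increasing sequence `(n_k)_{k ≥ 0}` of non-negative integers by `n_k = k` for `k < 0`, and
`c k = ∏_{j=0}^{k-1} Q_{[n_{j-1}+2, n_j]}` (empty product `= 1`).  Conclusion: for all
`k ≥ -2`, `(P'_k, Q'_k) = c_k (P_{n_k}, Q_{n_k})`; in particular the contracted continued
fraction has convergents `P_{n_k}/Q_{n_k}`. -/
theorem stmt3 (α β : ℤ → ℂ) (hα1 : α (-1) = 1) (hβ1 : β (-1) = 0)
    (hcontr : ∀ m n : ℤ, 0 ≤ m → m ≤ n → Bseg α β (m + 1) n 1 1 ≠ 0)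
    (nk : ℤ → ℤ) (hneg : ∀ k : ℤ, k < 0 → nk k = k)
    (hpos : ∀ k : ℤ, 0 ≤ k → 0 ≤ nk k)
    (hmono : ∀ k : ℤ, 0 ≤ k → nk k < nk (k + 1))
    (α' β' : ℤ → ℂ) (hα'1 : α' (-1) = 1) (hβ'1 : β' (-1) = 0)
    (hα' : ∀ k : ℤ, -1 ≤ k → α' (k + 1) =
      -(Bseg α β (nk (k - 1) + 2) (nk k + 1)).det *
        Bseg α β (nk (k - 2) + 2) (nk (k - 1)) 1 1 *
        Bseg α β (nk k + 2) (nk (k + 1)) 1 1)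
    (hβ' : ∀ k : ℤ, -1 ≤ k → β' (k + 1) = Bseg α β (nk (k - 1) + 2) (nk (k + 1)) 1 1)
    (c : ℤ → ℂ)
    (hc : ∀ k : ℤ, c k = ∏ j ∈ Finset.Icc 0 (k - 1), Bseg α β (nk (j - 1) + 2) (nk j) 1 1) :
    ∀ k : ℤ, -2 ≤ k →
      Bseg α' β' (-1) k 0 1 = c k * Bseg α β (-1) (nk k) 0 1 ∧
      Bseg α' β' (-1) k 1 1 = c k * Bseg α β (-1) (nk k) 1 1 ∧
      Bseg α' β' (-1) k 0 1 / Bseg α' β' (-1) k 1 1 =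
        Bseg α β (-1) (nk k) 0 1 / Bseg α β (-1) (nk k) 1 1 := by
  have hle := self_le_apply_of_extend hneg hpos hmono
  have hlt := strictMono_of_extend hneg hpos hmono
  have hc_succ (k : ℤ) : c (k + 1) = c k * Bseg α β (nk (k - 1) + 2) (nk k) 1 1 := by
    rw [hc, hc, add_sub_cancel_right, prod_Icc_Bseg_eq_prod_mul α β hneg]
  have hconv (i : Fin 2) : ∀ k, -1 ≤ k →
      Bseg α' β' (-1) (k - 1) i 1 = c (k - 1) * Bseg α β (-1) (nk (k - 1)) i 1 ∧
      Bseg α' β' (-1) k i 1 = c k * Bseg α β (-1) (nk k) i 1 := by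
    intro k hk
    induction k, hk using Int.leInduction with
    | base =>
      rw [show (-1 : ℤ) - 1 = -2 by norm_num, hneg (-2) (by norm_num), hneg (-1) (by norm_num),
        Bseg_of_lt α' β' (by norm_num), Bseg_of_lt α β (by norm_num), Bseg_self, Bseg_self]
      fin_cases i <;> simp [hc, Bmat, hα1, hβ1, hα'1, hβ'1]
    | succ k hk ih =>
      refine ⟨by simpa using ih.2, ?_⟩
      have hc₀ : c k = c (k - 1) * Bseg α β (nk (k - 2) + 2) (nk (k - 1)) 1 1 := by
        have := hc_succ (k - 1)
        rwa [sub_add_cancel, sub_sub, one_add_one_eq_two] at this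
      have key := contraction_identity α β (a := -1) (by linarith [hle (k - 1)])
        (hlt (sub_one_lt k)) (hlt (lt_add_one k)) i
      rw [Bseg_apply_one_add_one α' β' hk, ih.1, ih.2, hα' k hk, hβ' k hk, hc_succ k, hc₀]
      linear_combination (-c (k - 1) * Bseg α β (nk (k - 2) + 2) (nk (k - 1)) 1 1) * key
  intro k hk
  have hS (i : Fin 2) := by simpa using (hconv i (k + 1) (by omega)).1
  refine ⟨hS 0, hS 1, ?_⟩
  rw [hS 0, hS 1, mul_div_mul_left _ _ (hc k ▸ prod_Icc_Bseg_ne_zero α β hcontr hle hlt _)]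

end
end

section
/- The measure μ on [0,1] with density 1/x with respect to Lebesgue measure is invariant under the Farey tent map F, i.e., μ(F^{-1}(E)) = μ(E) for every Borel set E ⊆ [0,1]. -/
/-!
`F` has the two inverse branches `y ↦ y / (1 + y)` onto `[0, 1/2]` and `y ↦ 1 / (1 + y)` onto
`(1/2, 1]`, both with `|derivative| = 1 / (1 + y)²`. By the change of variables formula,
`μ (F⁻¹ E) = ∫_E (1 + y)⁻² ((1 + y) / y + (1 + y)) dy = ∫_E dy / y = μ E`.
-/

open MeasureTheory

noncomputable section

/-- The Farey tent map. -/
def F (x : ℝ) : ℝ := if x ≤ 1 / 2 then x / (1 - x) else (1 - x) / x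

/-- The infinite, σ-finite measure on `[0,1]` with density `1/x` with respect to Lebesgue
measure. -/
def fareyMeasure : Measure ℝ :=
  (volume.restrict (Set.Icc (0 : ℝ) 1)).withDensity fun x => ENNReal.ofReal (1 / x)

open Set

theorem measurable_F : Measurable F :=
  Measurable.ite measurableSet_Iic (by fun_prop) (by fun_prop)

theorem fareyMeasure_apply {s : Set ℝ} (hs : MeasurableSet s) :
    fareyMeasure s = ∫⁻ x in s ∩ Icc 0 1, ENNReal.ofReal (1 / x) := by
  rw [fareyMeasure, withDensity_apply _ hs, Measure.restrict_restrict hs]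

/-- The inverse branch of `F` onto `(1/2, 1]`. -/
def fareyInvRight (y : ℝ) : ℝ := (1 + y)⁻¹

/-- The inverse branch of `F` onto `[0, 1/2]`. -/
def fareyInvLeft (y : ℝ) : ℝ := 1 - fareyInvRight y

theorem fareyInvRight_injective : Function.Injective fareyInvRight :=
  fun _ _ h => add_left_cancel (inv_injective h)

theorem fareyInvLeft_injective : Function.Injective fareyInvLeft :=
  fun _ _ h => fareyInvRight_injective (sub_right_injective h)

theorem hasDerivAt_fareyInvRight {y : ℝ} (hy : 1 + y ≠ 0) :
    HasDerivAt fareyInvRight (-((1 + y) ^ 2)⁻¹) y := by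
  have h := ((hasDerivAt_id' y).const_add 1).inv hy
  rwa [neg_div, one_div] at h

theorem hasDerivAt_fareyInvLeft {y : ℝ} (hy : 1 + y ≠ 0) :
    HasDerivAt fareyInvLeft ((1 + y) ^ 2)⁻¹ y := by
  have h := (hasDerivAt_fareyInvRight hy).const_sub 1
  rwa [neg_neg] at h

theorem fareyInvLeft_eq_div {y : ℝ} (hy : 1 + y ≠ 0) : fareyInvLeft y = y / (1 + y) := by
  rw [fareyInvLeft, fareyInvRight]
  field_simp
  ring

theorem fareyInvLeft_mem_Icc {y : ℝ} (hy : y ∈ Icc (0 : ℝ) 1) :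
    fareyInvLeft y ∈ Icc 0 (1 / 2) := by
  obtain ⟨h0, h1⟩ := hy
  rw [fareyInvLeft_eq_div (by positivity)]
  constructor
  · positivity
  · rw [div_le_iff₀ (by positivity)]; linarith

theorem fareyInvRight_mem_Ioc {y : ℝ} (hy : y ∈ Ico (0 : ℝ) 1) :
    fareyInvRight y ∈ Ioc (1 / 2) 1 := by
  obtain ⟨h0, h1⟩ := hy
  rw [fareyInvRight, ← one_div]
  constructor
  · rw [lt_div_iff₀ (by positivity)]; linarith
  · rw [div_le_one (by positivity)]; linarith

theorem F_fareyInvLeft {y : ℝ} (hy : y ∈ Icc (0 : ℝ) 1) : F (fareyInvLeft y) = y := by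
  have hy' : 1 + y ≠ 0 := by linarith [hy.1]
  rw [F, if_pos (fareyInvLeft_mem_Icc hy).2, fareyInvLeft_eq_div hy']
  field_simp
  ring

theorem F_fareyInvRight {y : ℝ} (hy : y ∈ Ico (0 : ℝ) 1) : F (fareyInvRight y) = y := by
  have hy' : 1 + y ≠ 0 := by linarith [hy.1]
  rw [F, if_neg (fareyInvRight_mem_Ioc hy).1.not_ge, fareyInvRight]
  field_simp
  ring

theorem fareyInvLeft_F {x : ℝ} (hx : x ≤ 1 / 2) : fareyInvLeft (F x) = x := by
  have hx1 : 1 - x ≠ 0 := by linarith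
  rw [F, if_pos hx, fareyInvLeft, fareyInvRight]
  field_simp
  ring

theorem fareyInvRight_F {x : ℝ} (hx : 1 / 2 < x) : fareyInvRight (F x) = x := by
  have hx0 : x ≠ 0 := by positivity
  rw [F, if_neg hx.not_ge, fareyInvRight]
  field_simp
  ring

theorem image_fareyInvLeft {E : Set ℝ} (hE : E ⊆ Icc 0 1) :
    fareyInvLeft '' E = F ⁻¹' E ∩ Icc 0 (1 / 2) := by
  ext x
  constructor
  · rintro ⟨y, hy, rfl⟩
    exact ⟨by rwa [mem_preimage, F_fareyInvLeft (hE hy)], fareyInvLeft_mem_Icc (hE hy)⟩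
  · rintro ⟨hx, -, hx1⟩
    exact ⟨F x, hx, fareyInvLeft_F hx1⟩

theorem image_fareyInvRight {E : Set ℝ} (hE : E ⊆ Icc 0 1) :
    fareyInvRight '' (E \ {1}) = F ⁻¹' E ∩ Ioc (1 / 2) 1 := by
  ext x
  constructor
  · rintro ⟨y, ⟨hy, hy1⟩, rfl⟩
    have hy' : y ∈ Ico (0 : ℝ) 1 := ⟨(hE hy).1, (hE hy).2.lt_of_ne hy1⟩
    exact ⟨by rwa [mem_preimage, F_fareyInvRight hy'], fareyInvRight_mem_Ioc hy'⟩
  · rintro ⟨hx, hx0, hx1⟩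
    refine ⟨F x, ⟨hx, fun h1 => ?_⟩, fareyInvRight_F hx0⟩
    rw [← fareyInvRight_F hx0, mem_singleton_iff.1 h1] at hx0
    norm_num [fareyInvRight] at hx0

/-- The density `1 / x` is a fixed point of the transfer operator of `F`. -/
theorem transfer_one_div {y : ℝ} (hy : 0 < y) :
    ENNReal.ofReal |((1 + y) ^ 2)⁻¹| * ENNReal.ofReal (1 / fareyInvLeft y) +
      ENNReal.ofReal |-((1 + y) ^ 2)⁻¹| * ENNReal.ofReal (1 / fareyInvRight y) =
      ENNReal.ofReal (1 / y) := by
  rw [abs_neg, abs_of_pos (by positivity), fareyInvLeft_eq_div (by positivity), fareyInvRight,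
    ← ENNReal.ofReal_mul (by positivity), ← ENNReal.ofReal_mul (by positivity),
    ← ENNReal.ofReal_add (by positivity) (by positivity)]
  congr 1
  field_simp

/-- The measure with density `1/x` on `[0,1]` is invariant under the Farey tent map:
`μ (F⁻¹ E) = μ E` for every Borel set `E ⊆ [0,1]`. -/
theorem stmt8 (E : Set ℝ) (hE : MeasurableSet E) (hE1 : E ⊆ Set.Icc 0 1) :
    fareyMeasure (F ⁻¹' E) = fareyMeasure E := by
  have hpos : ∀ y ∈ E, 1 + y ≠ 0 := fun y hy => by linarith [(hE1 hy).1]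
  have hdisj : Disjoint (F ⁻¹' E ∩ Icc 0 (1 / 2)) (F ⁻¹' E ∩ Ioc (1 / 2) 1) :=
    ((Iic_disjoint_Ioc le_rfl).mono_left Icc_subset_Iic_self).mono inter_subset_right
      inter_subset_right
  calc fareyMeasure (F ⁻¹' E)
      = ∫⁻ x in (F ⁻¹' E ∩ Icc 0 (1 / 2)) ∪ (F ⁻¹' E ∩ Ioc (1 / 2) 1),
          ENNReal.ofReal (1 / x) := by
        rw [fareyMeasure_apply (measurable_F hE), ← inter_union_distrib_left,
          Icc_union_Ioc_eq_Icc (by norm_num) (by norm_num)]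
    _ = (∫⁻ x in fareyInvLeft '' E, ENNReal.ofReal (1 / x)) +
          ∫⁻ x in fareyInvRight '' (E \ {1}), ENNReal.ofReal (1 / x) := by
        rw [lintegral_union ((measurable_F hE).inter measurableSet_Ioc) hdisj,
          image_fareyInvLeft hE1, image_fareyInvRight hE1]
    _ = ∫⁻ y in E, (ENNReal.ofReal |((1 + y) ^ 2)⁻¹| * ENNReal.ofReal (1 / fareyInvLeft y) +
          ENNReal.ofReal |-((1 + y) ^ 2)⁻¹| * ENNReal.ofReal (1 / fareyInvRight y)) := by
        rw [lintegral_image_eq_lintegral_abs_deriv_mul hE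
            (fun y hy => (hasDerivAt_fareyInvLeft (hpos y hy)).hasDerivWithinAt)
            fareyInvLeft_injective.injOn,
          lintegral_image_eq_lintegral_abs_deriv_mul (hE.diff (measurableSet_singleton 1))
            (fun y hy => (hasDerivAt_fareyInvRight (hpos y hy.1)).hasDerivWithinAt)
            fareyInvRight_injective.injOn,
          setLIntegral_congr (sdiff_ae_eq_self.2 (measure_mono_null inter_subset_right
            (measure_singleton 1))),
          lintegral_add_left (by unfold fareyInvLeft fareyInvRight; fun_prop)]
    _ = ∫⁻ y in E, ENNReal.ofReal (1 / y) :=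
        setLIntegral_congr_fun_ae hE <| (Measure.ae_ne volume 0).mono fun y hy0 hy =>
          transfer_one_div ((hE1 hy).1.lt_of_ne (Ne.symm hy0))
    _ = fareyMeasure E := by rw [fareyMeasure_apply hE, inter_eq_left.2 hE1]

end
end
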